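/- arXiv:1703.02668 — 7 statements merged into one kernel-verified Lean document; each statement's English description precedes it below -/
import Mathlib

section
/- Let N and M be positive integers and let Δ ⊆ ℤ satisfy Δ + N ⊆ Δ and Δ + M ⊆ Δ. Then for every integer x: x lies in the (N,M)-skeleton of Δ (i.e., x is an N-generator or an M-cogenerator of Δ) if and only if x − N + M lies in the (M,N)-skeleton of Δ (i.e., x − N + M is an M-generator or an N-cogenerator of Δ). -/
/-! Both sides say the same thing: `x - N ∉ Δ` and `x + M ∈ Δ`. Indeed, along the chain
`x - K ∈ Δ → x ∈ Δ → x + L ∈ Δ`, being a `K`-generator or an `L`-cogenerator at `x` just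
means that the chain switches from outside `Δ` to inside somewhere between `x - K` and `x + L`. -/

theorem and_not_or_not_and_iff_of_imp {a b d : Prop} (hab : a → b) (hbd : b → d) :
    (b ∧ ¬a) ∨ (¬b ∧ d) ↔ ¬a ∧ d := by
  tauto

theorem generator_or_cogenerator_iff {K L : ℤ} {Δ : Set ℤ}
    (hK : ∀ x ∈ Δ, x + K ∈ Δ) (hL : ∀ x ∈ Δ, x + L ∈ Δ) (x : ℤ) :
    ((x ∈ Δ ∧ x - K ∉ Δ) ∨ (x ∉ Δ ∧ x + L ∈ Δ)) ↔ x - K ∉ Δ ∧ x + L ∈ Δ :=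
  and_not_or_not_and_iff_of_imp (fun h => by simpa using hK _ h) (hL x)

theorem statement1_general (N M : ℤ) (Δ : Set ℤ)
    (hΔN : ∀ x ∈ Δ, x + N ∈ Δ) (hΔM : ∀ x ∈ Δ, x + M ∈ Δ) (x : ℤ) :
    ((x ∈ Δ ∧ x - N ∉ Δ) ∨ (x ∉ Δ ∧ x + M ∈ Δ)) ↔
      (((x - N + M) ∈ Δ ∧ (x - N + M) - M ∉ Δ) ∨
        ((x - N + M) ∉ Δ ∧ (x - N + M) + N ∈ Δ)) := by
  rw [generator_or_cogenerator_iff hΔN hΔM, generator_or_cogenerator_iff hΔM hΔN,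
    add_sub_cancel_right, sub_add_eq_add_sub, sub_add_cancel]

/-- For positive integers `N, M` and an `(N,M)`-invariant `Δ ⊆ ℤ`,
an integer `x` lies in the `(N,M)`-skeleton of `Δ` (x is an `N`-generator or an
`M`-cogenerator) if and only if `x - N + M` lies in the `(M,N)`-skeleton of `Δ`
(an `M`-generator or an `N`-cogenerator). -/
theorem statement1 (N M : ℤ) (hN : 0 < N) (hM : 0 < M) (Δ : Set ℤ)
    (hΔN : ∀ x ∈ Δ, x + N ∈ Δ) (hΔM : ∀ x ∈ Δ, x + M ∈ Δ) (x : ℤ) :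
    ((x ∈ Δ ∧ x - N ∉ Δ) ∨ (x ∉ Δ ∧ x + M ∈ Δ)) ↔
      (((x - N + M) ∈ Δ ∧ (x - N + M) - M ∉ Δ) ∨
        ((x - N + M) ∉ Δ ∧ (x - N + M) + N ∈ Δ)) :=
  statement1_general N M Δ hΔN hΔM x
end

section
/- Let d ≥ 1 and let S_0, S_1, …, S_{d−1} be pairwise disjoint nonempty finite subsets of ℤ. For i ≠ j in {0,…,d−1} set b̃_{ij} = min{ y − x : x ∈ S_i, y ∈ S_j, y > x } if this set is nonempty, and b̃_{ij} = ∞ otherwise. Then a tuple (a_1,…,a_{d−1}) ∈ ℝ^{d−1} is an acceptable shifting of S_0,…,S_{d−1} if and only if, setting a_0 = 0, one has a_i − a_j < b̃_{ij} for all i ≠ j in {0,…,d−1} (inequalities with b̃_{ij} = ∞ being vacuous). -/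
/-- The set `S + c ⊆ ℝ`, the shift of a finite set of integers by a real number. -/
def shiftedSet (S : Finset ℤ) (c : ℝ) : Set ℝ := (fun z : ℤ => (z : ℝ) + c) '' (S : Set ℤ)

/-- A tuple `a` (with `a 0 = 0`, modelling `(a_1, …, a_{d-1}) ∈ ℝ^{d-1}`) is an *acceptable
shifting* of `S_0, …, S_d` if there is a continuous path `φ : [0,1] → ℝ^{d}` (with vanishing
`0`-th component, so that `S_0` is never shifted) from `0` to `a` such that at every time `t`
the sets `S_0, S_1 + φ_1(t), …, S_d + φ_d(t)` are pairwise disjoint. -/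
def IsAcceptableShifting {d : ℕ} (S : Fin (d + 1) → Finset ℤ) (a : Fin (d + 1) → ℝ) : Prop :=
  a 0 = 0 ∧
  ∃ φ : ℝ → Fin (d + 1) → ℝ,
    ContinuousOn φ (Set.Icc 0 1) ∧
    (∀ t ∈ Set.Icc (0 : ℝ) 1, φ t 0 = 0) ∧
    φ 0 = (fun _ => 0) ∧ φ 1 = a ∧
    ∀ t ∈ Set.Icc (0 : ℝ) 1, ∀ i j, i ≠ j →
      Disjoint (shiftedSet (S i) (φ t i)) (shiftedSet (S j) (φ t j))

/-- `b̃_{ij} = min { y - x : x ∈ S_i, y ∈ S_j, y > x }`, as an extended real number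
(`+∞` when the set is empty, since `sInf ∅ = ⊤` in `EReal`). -/
noncomputable def btilde {d : ℕ} (S : Fin (d + 1) → Finset ℤ) (i j : Fin (d + 1)) : EReal :=
  sInf ((fun p : ℤ × ℤ => (((p.2 - p.1 : ℤ) : ℝ) : EReal)) ''
    {p : ℤ × ℤ | p.1 ∈ S i ∧ p.2 ∈ S j ∧ p.1 < p.2})

/-! Along the path the difference `φ_i - φ_j` moves continuously from `0`, so it cannot jump over
a gap `y - x > 0` between `x ∈ S_i` and `y ∈ S_j` without bringing `x + φ_i` onto `y + φ_j`.
Hence `a_i - a_j` stays below every such gap, i.e. below `b̃_{ij}`, since `S_i × S_j` is finite.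
Conversely, under these bounds the straight path `t ↦ t • a` never creates a collision. -/

lemma disjoint_shiftedSet_iff {S T : Finset ℤ} {c e : ℝ} :
    Disjoint (shiftedSet S c) (shiftedSet T e) ↔ ∀ x ∈ S, ∀ y ∈ T, c - e ≠ y - x := by
  simp only [shiftedSet, Set.disjoint_left, Set.mem_image, Finset.mem_coe]
  constructor
  · rintro h x hx y hy hxy
    exact h ⟨x, hx, rfl⟩ ⟨y, hy, by linarith⟩
  · rintro h _ ⟨x, hx, rfl⟩ ⟨y, hy, hxy⟩
    exact h x hx y hy (by linarith)

lemma lt_btilde_iff {d : ℕ} (S : Fin (d + 1) → Finset ℤ) (i j : Fin (d + 1)) (r : ℝ) :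
    (r : EReal) < btilde S i j ↔ ∀ x ∈ S i, ∀ y ∈ S j, x < y → r < y - x := by
  constructor
  · intro h x hx y hy hxy
    have hle : btilde S i j ≤ (((y - x : ℤ) : ℝ) : EReal) := sInf_le ⟨(x, y), ⟨hx, hy, hxy⟩, rfl⟩
    exact_mod_cast h.trans_le hle
  · intro h
    have hfin : {p : ℤ × ℤ | p.1 ∈ S i ∧ p.2 ∈ S j ∧ p.1 < p.2}.Finite :=
      (S i ×ˢ S j).finite_toSet.subset fun p hp => Finset.mem_product.2 ⟨hp.1, hp.2.1⟩
    rcases (Set.image _ _).eq_empty_or_nonempty with hempty | hne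
    · rw [btilde, hempty, sInf_empty]
      exact EReal.coe_lt_top r
    · obtain ⟨⟨x, y⟩, ⟨hx, hy, hxy⟩, hmin⟩ := hne.csInf_mem (hfin.image _)
      rw [btilde, ← hmin]
      show (r : EReal) < (((y - x : ℤ) : ℝ) : EReal)
      exact_mod_cast h x hx y hy hxy

lemma lt_of_continuousOn_of_forall_ne {f : ℝ → ℝ} {v : ℝ} (hf : ContinuousOn f (Set.Icc 0 1))
    (hf0 : f 0 = 0) (hv : 0 < v) (hne : ∀ t ∈ Set.Icc (0 : ℝ) 1, f t ≠ v) : f 1 < v := by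
  by_contra! hle
  obtain ⟨t, ht, hft⟩ := intermediate_value_Icc zero_le_one hf ⟨by rw [hf0]; exact hv.le, hle⟩
  exact hne t ht hft

lemma mul_lt_of_mem_Icc_of_lt {t r v : ℝ} (ht : t ∈ Set.Icc (0 : ℝ) 1) (hrv : r < v) (hv : 0 < v) :
    t * r < v := by
  rcases le_or_gt r 0 with hr | hr
  · nlinarith [ht.1]
  · nlinarith [ht.2]

theorem statement2_general (d : ℕ) (S : Fin (d + 1) → Finset ℤ)
    (hdisj : ∀ i j, i ≠ j → Disjoint (S i) (S j))
    (a : Fin (d + 1) → ℝ) :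
    IsAcceptableShifting S a ↔
      (a 0 = 0 ∧ ∀ i j, i ≠ j → ((a i - a j : ℝ) : EReal) < btilde S i j) := by
  constructor
  · rintro ⟨ha0, φ, hφc, -, hφ0, hφ1, hφd⟩
    refine ⟨ha0, fun i j hij => (lt_btilde_iff S i j _).2 fun x hx y hy hxy => ?_⟩
    have hf : ContinuousOn (fun t => φ t i - φ t j) (Set.Icc 0 1) :=
      ((continuous_apply i).comp_continuousOn hφc).sub ((continuous_apply j).comp_continuousOn hφc)
    have hend := lt_of_continuousOn_of_forall_ne hf (by simp [hφ0]) (sub_pos.2 (Int.cast_lt.2 hxy))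
      fun t ht => disjoint_shiftedSet_iff.1 (hφd t ht i j hij) x hx y hy
    simpa [hφ1] using hend
  · rintro ⟨ha0, hlt⟩
    refine ⟨ha0, fun t k => t * a k, by fun_prop, fun t _ => by simp [ha0], by simp, by simp, ?_⟩
    intro t ht i j hij
    refine disjoint_shiftedSet_iff.2 fun x hx y hy => ?_
    rcases lt_trichotomy x y with hxy | rfl | hxy
    · have hgap := (lt_btilde_iff S i j _).1 (hlt i j hij) x hx y hy hxy
      have := mul_lt_of_mem_Icc_of_lt ht hgap (sub_pos.2 (Int.cast_lt.2 hxy))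
      exact fun h => by linarith
    · exact absurd hy (Finset.disjoint_left.1 (hdisj i j hij) hx)
    · have hgap := (lt_btilde_iff S j i _).1 (hlt j i hij.symm) y hy x hx hxy
      have := mul_lt_of_mem_Icc_of_lt ht hgap (sub_pos.2 (Int.cast_lt.2 hxy))
      exact fun h => by linarith

/-- Let `d ≥ 1` (here `d+1` with `d : ℕ`) and let `S_0, …, S_d` be pairwise
disjoint nonempty finite subsets of `ℤ`. A tuple is an acceptable shifting if and only if
(setting `a_0 = 0`) one has `a_i - a_j < b̃_{ij}` for all `i ≠ j`. -/
theorem statement2 (d : ℕ) (S : Fin (d + 1) → Finset ℤ)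
    (hne : ∀ i, (S i).Nonempty)
    (hdisj : ∀ i j, i ≠ j → Disjoint (S i) (S j))
    (a : Fin (d + 1) → ℝ) :
    IsAcceptableShifting S a ↔
      (a 0 = 0 ∧ ∀ i j, i ≠ j → ((a i - a j : ℝ) : EReal) < btilde S i j) :=
  statement2_general d S hdisj a
end

section
/- Let d ≥ 1 and let S_0, S_1, …, S_{d−1} be pairwise disjoint nonempty finite subsets of ℤ. Then the set of acceptable shiftings of S_0,…,S_{d−1} is a convex subset of ℝ^{d−1}. -/
/-!
Call a shift vector `x` *order preserving* if, for every pair of points `p ∈ S_i`, `q ∈ S_j`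
from different sets, the shifted points `p + x_i` and `q + x_j` lie in the same order as `p`
and `q`, i.e. `(p - q) * (p + x_i - (q + x_j)) > 0`. Along an admissible path the shifted
points can never collide, so by the intermediate value theorem they can never swap: every point
of the path, in particular its endpoint, is order preserving. Conversely, an order preserving
`a` is reached by the straight path `t ↦ t • a`. Hence the acceptable shiftings are exactly the
order preserving `a` with `a 0 = 0`, a set cut out by one linear equation and finitely many
strict affine inequalities.
-/

lemma IsPreconnected.pos_of_ne_zero {X α : Type*} [TopologicalSpace X] [LinearOrder α]
    [TopologicalSpace α] [OrderClosedTopology α] [Zero α] {s : Set X} (hs : IsPreconnected s)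
    {f : X → α} (hf : ContinuousOn f s) (hne : ∀ x ∈ s, f x ≠ 0) {a x : X} (ha : a ∈ s)
    (hpos : 0 < f a) (hx : x ∈ s) : 0 < f x := by
  by_contra! hle
  obtain ⟨y, hy, hfy⟩ := hs.intermediate_value hx ha hf ⟨hle, hpos.le⟩
  exact hne y hy hfy

lemma shiftedSet_disjoint_iff (S T : Finset ℤ) (c e : ℝ) :
    Disjoint (shiftedSet S c) (shiftedSet T e) ↔
      ∀ p ∈ S, ∀ q ∈ T, (p : ℝ) + c ≠ q + e := by
  simp only [shiftedSet, Set.disjoint_left, Set.mem_image, Finset.mem_coe]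
  constructor
  · rintro h p hp q hq hpq
    exact h ⟨p, hp, rfl⟩ ⟨q, hq, hpq.symm⟩
  · rintro h _ ⟨p, hp, rfl⟩ ⟨q, hq, hqp⟩
    exact h p hp q hq hqp.symm

def PreservesOrder {ι : Type*} (S : ι → Finset ℤ) (x : ι → ℝ) : Prop :=
  ∀ i j, i ≠ j → ∀ p ∈ S i, ∀ q ∈ S j, 0 < ((p : ℝ) - q) * (p + x i - (q + x j))

section PreservesOrder

variable {ι : Type*} {S : ι → Finset ℤ}

lemma convex_setOf_preservesOrder : Convex ℝ {x : ι → ℝ | PreservesOrder S x} := by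
  intro x hx y hy a b ha hb hab i j hij p hp q hq
  have haffine : ((p : ℝ) - q) * (p + (a • x + b • y) i - (q + (a • x + b • y) j)) =
      a • (((p : ℝ) - q) * (p + x i - (q + x j))) +
        b • (((p : ℝ) - q) * (p + y i - (q + y j))) := by
    simp only [Pi.add_apply, Pi.smul_apply, smul_eq_mul]
    linear_combination (-((p : ℝ) - q) ^ 2) * hab
  rw [haffine]
  exact convex_Ioi (0 : ℝ) (hx i j hij p hp q hq) (hy i j hij p hp q hq) ha hb hab

lemma preservesOrder_zero (hdisj : ∀ i j, i ≠ j → Disjoint (S i) (S j)) :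
    PreservesOrder S 0 := by
  intro i j hij p hp q hq
  have hpq : p ≠ q := fun h => Finset.disjoint_left.1 (hdisj i j hij) hp (h ▸ hq)
  have hpq' : (p : ℝ) - q ≠ 0 := sub_ne_zero.2 (mod_cast hpq)
  simpa using mul_self_pos.2 hpq'

lemma PreservesOrder.disjoint_shiftedSet {x : ι → ℝ} (hx : PreservesOrder S x) {i j : ι}
    (hij : i ≠ j) : Disjoint (shiftedSet (S i) (x i)) (shiftedSet (S j) (x j)) := by
  rw [shiftedSet_disjoint_iff]
  intro p hp q hq heq
  simpa [heq] using hx i j hij p hp q hq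

lemma preservesOrder_of_path (hdisj : ∀ i j, i ≠ j → Disjoint (S i) (S j))
    {φ : ℝ → ι → ℝ} (hφ : ContinuousOn φ (Set.Icc 0 1)) (hφ0 : φ 0 = 0)
    (hφS : ∀ t ∈ Set.Icc (0 : ℝ) 1, ∀ i j, i ≠ j →
      Disjoint (shiftedSet (S i) (φ t i)) (shiftedSet (S j) (φ t j)))
    {t : ℝ} (ht : t ∈ Set.Icc (0 : ℝ) 1) : PreservesOrder S (φ t) := by
  intro i j hij p hp q hq
  set f : ℝ → ℝ := fun s => ((p : ℝ) - q) * (p + φ s i - (q + φ s j))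
  have hf0 : 0 < f 0 := by simpa [f, hφ0] using preservesOrder_zero hdisj i j hij p hp q hq
  have hf : ContinuousOn f (Set.Icc 0 1) := by fun_prop
  have hne : ∀ s ∈ Set.Icc (0 : ℝ) 1, f s ≠ 0 := fun s hs =>
    mul_ne_zero (left_ne_zero_of_mul hf0.ne')
      (sub_ne_zero.2 ((shiftedSet_disjoint_iff _ _ _ _).1 (hφS s hs i j hij) p hp q hq))
  exact isPreconnected_Icc.pos_of_ne_zero hf hne (Set.left_mem_Icc.2 zero_le_one) hf0 ht

end PreservesOrder

theorem isAcceptableShifting_iff {d : ℕ} {S : Fin (d + 1) → Finset ℤ}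
    (hdisj : ∀ i j, i ≠ j → Disjoint (S i) (S j)) {a : Fin (d + 1) → ℝ} :
    IsAcceptableShifting S a ↔ a 0 = 0 ∧ PreservesOrder S a := by
  constructor
  · rintro ⟨ha0, φ, hφ, -, hφ0, rfl, hφS⟩
    exact ⟨ha0, preservesOrder_of_path hdisj hφ hφ0 hφS (Set.right_mem_Icc.2 zero_le_one)⟩
  · rintro ⟨ha0, ha⟩
    refine ⟨ha0, fun t => t • a, by fun_prop, fun t _ => by simp [ha0], zero_smul ℝ a,
      one_smul ℝ a, fun t ht i j hij => ?_⟩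
    exact (convex_setOf_preservesOrder.smul_mem_of_zero_mem (preservesOrder_zero hdisj) ha ht)
      |>.disjoint_shiftedSet hij

theorem statement3_general (d : ℕ) (S : Fin (d + 1) → Finset ℤ)
    (hdisj : ∀ i j, i ≠ j → Disjoint (S i) (S j)) :
    Convex ℝ {a : Fin (d + 1) → ℝ | IsAcceptableShifting S a} := by
  have hset : {a | IsAcceptableShifting S a} = {a | a 0 = 0} ∩ {a | PreservesOrder S a} :=
    Set.ext fun _ => isAcceptableShifting_iff hdisj
  rw [hset]
  exact (convex_hyperplane (LinearMap.proj 0).isLinear 0).inter convex_setOf_preservesOrder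

/-- Let `d ≥ 1` and `S_0, …, S_{d-1}` be pairwise disjoint nonempty finite
subsets of `ℤ`. The set of acceptable shiftings is convex. -/
theorem statement3 (d : ℕ) (S : Fin (d + 1) → Finset ℤ)
    (hne : ∀ i, (S i).Nonempty)
    (hdisj : ∀ i j, i ≠ j → Disjoint (S i) (S j)) :
    Convex ℝ {a : Fin (d + 1) → ℝ | IsAcceptableShifting S a} :=
  statement3_general d S hdisj
end

section
/- Let n and m be coprime positive integers. The map (x,y) ↦ mn − m − n − nx − my is a bijection from the set { (x,y) ∈ ℤ≥0 × ℤ≥0 : nx + my ≤ mn − m − n } onto the set ℤ≥0 ∖ Γ_{n,m} of nonnegative integers not representable as a nonnegative integer combination of n and m. -/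
/-!
Since `n` is invertible modulo `m`, every integer is uniquely `n x + m y` with `0 ≤ x < m`;
boxes have `x < m`, which gives injectivity. If `mn - m - n - z = n x + m y` in this normal
form, then `z = n (m - 1 - x) + m (-1 - y)`, so a gap `z` forces `y ≥ 0` and comes from the
box `(x, y)`.
Conversely the image of a box is not representable, since otherwise `mn = n a + m b` with
`a, b > 0`, whence `m ∣ a` and `n a + m b > mn`.
-/

namespace IsCoprime

variable {n m : ℤ}

theorem exists_eq_mul_add_mul_of_nonneg_of_lt (h : IsCoprime n m) (hm : 0 < m) (w : ℤ) :
    ∃ x y, 0 ≤ x ∧ x < m ∧ w = n * x + m * y := by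
  obtain ⟨u, v, huv⟩ := h
  refine ⟨w * u % m, w * v + n * (w * u / m), Int.emod_nonneg _ hm.ne',
    Int.emod_lt_of_pos _ hm, ?_⟩
  linear_combination (-w) * huv - n * Int.emod_def (w * u) m

theorem eq_of_mul_add_mul_eq (h : IsCoprime n m) {x y x' y' : ℤ}
    (hx : 0 ≤ x) (hxm : x < m) (hx' : 0 ≤ x') (hxm' : x' < m)
    (heq : n * x + m * y = n * x' + m * y') : x = x' ∧ y = y' := by
  have hdvd : m ∣ n * (x - x') := ⟨y' - y, by linear_combination heq⟩
  have hxx : x - x' = 0 :=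
    Int.eq_zero_of_abs_lt_dvd (h.symm.dvd_of_dvd_mul_left hdvd)
      (abs_sub_lt_iff.mpr ⟨by omega, by omega⟩)
  have hyy : m * y = m * y' := by linear_combination heq - n * hxx
  exact ⟨by omega, mul_left_cancel₀ (by omega) hyy⟩

theorem mul_add_mul_ne_mul (h : IsCoprime n m) (hn : 0 < n) (hm : 0 < m) {a b : ℤ}
    (ha : 0 < a) (hb : 0 < b) :
    n * a + m * b ≠ n * m := by
  intro heq
  have ham : m ≤ a :=
    Int.le_of_dvd ha (h.symm.dvd_of_dvd_mul_left ⟨n - b, by linear_combination heq⟩)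
  nlinarith [mul_le_mul_of_nonneg_left ham hn.le, mul_pos hm hb]

end IsCoprime

/-- For coprime positive integers `n, m`, the map
`(x,y) ↦ mn - m - n - nx - my` is a bijection from the set of boxes
`{(x,y) ∈ ℤ≥0 × ℤ≥0 : nx + my ≤ mn - m - n}` (the boxes of nonnegative rank, i.e. those
under the diagonal of the `n × m` rectangle) onto the set of nonnegative integers not
representable as a nonnegative integer combination of `n` and `m`. -/
theorem statement8 (n m : ℕ) (hn : 0 < n) (hm : 0 < m) (hco : Nat.Coprime n m) :
    Set.BijOn (fun p : ℤ × ℤ => (m : ℤ) * n - m - n - n * p.1 - m * p.2)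
      {p : ℤ × ℤ | 0 ≤ p.1 ∧ 0 ≤ p.2 ∧ (n : ℤ) * p.1 + (m : ℤ) * p.2 ≤ (m : ℤ) * n - m - n}
      {z : ℤ | 0 ≤ z ∧ ¬∃ a b : ℤ, 0 ≤ a ∧ 0 ≤ b ∧ z = a * n + b * m} := by
  have h : IsCoprime (n : ℤ) m := Nat.isCoprime_iff_coprime.mpr hco
  have hnZ : (0 : ℤ) < n := by exact_mod_cast hn
  have hmZ : (0 : ℤ) < m := by exact_mod_cast hm
  have lt_of_box {x y : ℤ} (hx : 0 ≤ x) (hy : 0 ≤ y) (hle : n * x + m * y ≤ m * n - m - n) :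
      x < m := by
    nlinarith
  refine ⟨?mapsTo, ?injOn, ?surjOn⟩
  case mapsTo =>
    rintro ⟨x, y⟩ ⟨hx, hy, hle⟩
    refine ⟨by simp only; linarith, ?_⟩
    rintro ⟨a, b, ha, hb, hz⟩
    exact h.mul_add_mul_ne_mul hnZ hmZ (a := a + x + 1) (b := b + y + 1) (by omega) (by omega)
      (by linear_combination -hz)
  case injOn =>
    rintro ⟨x, y⟩ ⟨hx, hy, hle⟩ ⟨x', y'⟩ ⟨hx', hy', hle'⟩ heq
    simp only at hx hy hle hx' hy' hle' heq
    obtain ⟨rfl, rfl⟩ := h.eq_of_mul_add_mul_eq (y := y) (y' := y') hx (lt_of_box hx hy hle)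
      hx' (lt_of_box hx' hy' hle') (by linarith)
    rfl
  case surjOn =>
    rintro z ⟨hz, hgap⟩
    obtain ⟨x, y, hx, hxm, hw⟩ :=
      h.exists_eq_mul_add_mul_of_nonneg_of_lt hmZ (m * n - m - n - z)
    have hy : 0 ≤ y := by
      by_contra! hy
      exact hgap ⟨m - 1 - x, -1 - y, by omega, by omega, by linear_combination -hw⟩
    exact ⟨(x, y), ⟨hx, hy, by linarith⟩, by simp only; linarith⟩
end

section
/- Let n and m be coprime positive integers and let Δ be a 0-normalized (n,m)-invariant subset of ℤ≥0. Then ζ(D(Δ)) = G(Δ). Concretely: the ranks of the vertical steps of the boundary path of D(Δ) are exactly the n-generators of Δ and the ranks of its horizontal steps are exactly the m-cogenerators of Δ, and sorting the steps of the boundary path of D(Δ) in increasing order of rank produces precisely the path whose step word is obtained by sorting the union of the n-generators and m-cogenerators of Δ in increasing order and replacing each n-generator by a vertical step and each m-cogenerator by a horizontal step. -/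
/-!
Words `w : List Bool` encode lattice paths in the `n × m` rectangle from `(m,0)` to `(0,n)`;
`true` is a vertical step and `false` a horizontal step.
-/

/-- The rank of the `k`-th step (0-indexed): the first step has rank `-m`, and each rank is
the previous one plus `n` if the previous step is horizontal, minus `m` if it is vertical. -/
def stepRank (n m : ℕ) (w : List Bool) (k : ℕ) : ℤ :=
  -(m : ℤ) + ∑ j ∈ Finset.range k, (if w.getD j false then -(m : ℤ) else (n : ℤ))

/-- The sweep map `ζ`: rearrange the steps of `w` in increasing order of rank. -/
def sweep (n m : ℕ) (w : List Bool) : List Bool :=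
  ((List.range w.length).mergeSort (fun k k' =>
      decide (stepRank n m w k < stepRank n m w k' ∨
        (stepRank n m w k = stepRank n m w k' ∧ k' ≤ k)))).map
    (fun k => w.getD k false)

/-- The index in `w` of the unique vertical step lying in row `y` (the `(y+1)`-st `true`). -/
def vIdx (w : List Bool) (y : ℕ) : ℕ := (w.findIdxs (· == true)).getD y 0

/-- The index in `w` of the unique horizontal step lying in column `x` (the `(m-x)`-th
`false`, since horizontal steps are traversed from column `m-1` down to column `0`). -/
def hIdx (m : ℕ) (w : List Bool) (x : ℕ) : ℕ := (w.findIdxs (· == false)).getD (m - 1 - x) 0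

/-- The box `(x,y)` belongs to the Young diagram bounded by the path `w` iff the vertical
step in its row occurs before the horizontal step in its column. -/
def inDiagram (m : ℕ) (w : List Bool) (x y : ℕ) : Prop := vIdx w y < hIdx m w x

/-- The rank of the box `(x,y)` in the `n × m` rectangle:
`rank(x,y) = mn - m - n - nx - my`. -/
def boxRank (n m : ℕ) (x y : ℕ) : ℤ := (m : ℤ) * n - m - n - n * x - m * y

/-!
Let step `k` of the path be preceded by `t` vertical and `f` horizontal steps, so that its rank
is `-m + n f - m t`. If the step is vertical, the boxes of its row have ranks `rank + n j` for
`-f ≤ j < m - f`, and such a box lies in `D(Δ)` exactly when `j ≥ 0`; past the right edge of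
the rectangle these numbers are negative, past the left edge they are nonnegative combinations
of `n` and `m`. So `rank + nℤ` meets `Δ` exactly from `rank` on: the rank is an `n`-generator.
Dually, reading the column of a horizontal step shows that `rank + mℤ` meets `Δ` exactly from
`rank + m` on: the rank is an `m`-cogenerator. Such an entry point is unique in its residue
class, and since `n, m` are coprime the vertical (horizontal) ranks meet every class modulo `n`
(modulo `m`), which gives all generators (cogenerators). Finally `rank = -m + n k - (n + m) t`
is injective for `0 ≤ k < n + m`, so sorting the steps by rank lists the union of generators
and cogenerators in increasing order.
-/

namespace List

variable {α : Type*} {p : α → Bool} {l : List α}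

theorem countP_take_succ_eq (k : ℕ) (hk : k < l.length) :
    (l.take (k + 1)).countP p = (l.take k).countP p + if p l[k] then 1 else 0 := by
  rw [take_add_one, getElem?_eq_getElem hk, Option.toList_some, countP_append, countP_singleton]

theorem findIdxs_getD_lt_iff {j k : ℕ} (hj : j < l.countP p) :
    (l.findIdxs p).getD j 0 < k ↔ j < (l.take k).countP p := by
  have hlen : j < (l.findIdxs p).length := by simpa using hj
  rw [getD_eq_getElem _ _ hlen, getElem_findIdxs_eq_findIdxNth,
    ← countPBefore_eq_countP_take]
  constructor
  · intro h
    have hi := findIdxNth_lt_length_of_lt_countP hj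
    calc j < l.countPBefore p (l.findIdxNth p j + 1) := by
          rw [countPBefore_eq_countP_take, countP_take_succ_eq _ hi,
            ← countPBefore_eq_countP_take, countPBefore_findIdxNth_of_lt_countP hj,
            if_pos pos_findIdxNth_getElem]
          omega
      _ ≤ l.countPBefore p k := countPBefore_mono h
  · intro h
    by_contra! hk
    have := countPBefore_mono (p := p) (xs := l) hk
    rw [countPBefore_findIdxNth_of_lt_countP hj] at this
    omega

theorem countP_take_lt_countP {k : ℕ} (hk : k < l.length) (hp : p l[k]) :
    (l.take k).countP p < l.countP p := by
  rw [← countPBefore_eq_countP_take]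
  exact countPBefore_lt_countP_of_lt_length_of_pos hp

theorem findIdxs_getD_countP_take {k : ℕ} (hk : k < l.length) (hp : p l[k]) :
    (l.findIdxs p).getD ((l.take k).countP p) 0 = k := by
  have hlen : (l.take k).countP p < (l.findIdxs p).length := by
    simpa using countP_take_lt_countP hk hp
  rw [getD_eq_getElem _ _ hlen, getElem_findIdxs_eq_findIdxNth,
    ← countPBefore_eq_countP_take, findIdxNth_countPBefore_of_lt_length_of_pos hp]

theorem exists_countP_take_eq {j : ℕ} (hj : j < l.countP p) :
    ∃ k, ∃ hk : k < l.length, p l[k] ∧ (l.take k).countP p = j :=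
  ⟨l.findIdxNth p j, findIdxNth_lt_length_of_lt_countP hj, pos_findIdxNth_getElem,
    by rw [← countPBefore_eq_countP_take, countPBefore_findIdxNth_of_lt_countP hj]⟩

end List

theorem exists_lt_dvd_sub_mul {p q : ℕ} (hp : 0 < p) (hpq : p.Coprime q) (a : ℤ) :
    ∃ i < p, (p : ℤ) ∣ a - q * i := by
  obtain ⟨u, v, huv⟩ := Nat.isCoprime_iff_coprime.mpr hpq.symm
  have hr := Int.emod_add_mul_ediv (u * a) p
  have hr0 := Int.emod_nonneg (u * a) (b := p) (by omega)
  have hrp := Int.emod_lt_of_pos (u * a) (b := p) (by omega)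
  refine ⟨((u * a) % p).toNat, by omega, a * v + q * (u * a / p), ?_⟩
  rw [Int.toNat_of_nonneg hr0]
  linear_combination -a * huv - q * hr

section Word

variable {n m : ℕ} {w : List Bool} {k : ℕ}

theorem stepRank_eq (hk : k ≤ w.length) :
    stepRank n m w k = -m + n * (w.take k).count false - m * (w.take k).count true := by
  induction k with
  | zero => simp [stepRank]
  | succ k ih =>
    have hk' : k < w.length := hk
    have hsucc : stepRank n m w (k + 1) =
        stepRank n m w k + if w[k] then -(m : ℤ) else n := by
      rw [stepRank, stepRank, Finset.sum_range_succ, List.getD_eq_getElem _ _ hk', add_assoc]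
    rw [hsucc, ih hk'.le, List.count, List.count, List.countP_take_succ_eq k hk',
      List.countP_take_succ_eq k hk']
    cases w[k] <;>
      simp only [beq_false, beq_true, Bool.not_true, Bool.false_eq_true, ↓reduceIte, BEq.rfl,
        Nat.cast_add, Nat.cast_one, add_zero] <;>
      ring

theorem stepRank_eq_sub_mul_count_true (hk : k ≤ w.length) :
    stepRank n m w k = -m + n * k - (n + m) * (w.take k).count true := by
  have hsum := List.count_true_add_count_false (w.take k)
  rw [List.length_take_of_le hk] at hsum
  have hk' : (k : ℤ) = (w.take k).count true + (w.take k).count false := by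
    exact_mod_cast hsum.symm
  rw [stepRank_eq hk, hk']
  ring

theorem stepRank_injOn (hco : n.Coprime m) (hlen : w.length = n + m) :
    Set.InjOn (stepRank n m w) (Set.Iio (n + m)) := by
  intro k hk k' hk' h
  simp only [Set.mem_Iio] at hk hk'
  rw [stepRank_eq_sub_mul_count_true (by omega), stepRank_eq_sub_mul_count_true (by omega)] at h
  have hdvd : ((n + m : ℕ) : ℤ) ∣ n * ((k : ℤ) - k') :=
    ⟨(w.take k).count true - (w.take k').count true, by push_cast; linear_combination h⟩
  have hcop : IsCoprime ((n + m : ℕ) : ℤ) n :=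
    Nat.isCoprime_iff_coprime.mpr (Nat.coprime_self_add_left.mpr hco.symm)
  have hzero := Int.eq_zero_of_abs_lt_dvd (hcop.dvd_of_dvd_mul_left hdvd)
    (by rw [abs_lt]; push_cast; omega)
  omega

theorem inDiagram_iff_of_vertical (hm : w.count false = m) (hk : k < w.length) (hv : w[k] = true)
    {x : ℕ} (hx : x < m) :
    inDiagram m w x ((w.take k).count true) ↔ x + (w.take k).count false < m := by
  have hidx : vIdx w ((w.take k).count true) = k :=
    List.findIdxs_getD_countP_take hk (by simpa using hv)
  have hsucc : (w.take (k + 1)).count false = (w.take k).count false := by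
    simp [List.count, List.countP_take_succ_eq k hk, hv]
  rw [inDiagram, hidx, hIdx, ← not_le, ← Nat.lt_succ_iff,
    List.findIdxs_getD_lt_iff (by rw [← List.count, hm]; omega), ← List.count, hsucc]
  omega

theorem inDiagram_iff_of_horizontal (hn : w.count true = n) (hm : w.count false = m)
    (hk : k < w.length) (hh : w[k] = false) {y : ℕ} (hy : y < n) :
    inDiagram m w (m - 1 - (w.take k).count false) y ↔ y < (w.take k).count true := by
  have hf : (w.take k).count false < m :=
    hm ▸ List.countP_take_lt_countP hk (by simpa using hh)
  have hidx : hIdx m w (m - 1 - (w.take k).count false) = k := by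
    rw [hIdx, Nat.sub_sub_self (by omega)]
    exact List.findIdxs_getD_countP_take hk (by simpa using hh)
  rw [inDiagram, hidx, vIdx, List.findIdxs_getD_lt_iff (by rw [← List.count, hn]; exact hy)]
  rfl

theorem exists_sweep_getD_eq {N : ℕ} (hN : w.length = N)
    (hinj : Set.InjOn (stepRank n m w) (Set.Iio N)) :
    ∃ σ : Fin N → ℕ, Set.range σ = Set.Iio N ∧ StrictMono (stepRank n m w ∘ σ) ∧
      ∀ k : Fin N, (sweep n m w).getD k false = w.getD (σ k) false := by
  set r := stepRank n m w
  set le : ℕ → ℕ → Bool := fun k k' => decide (r k < r k' ∨ (r k = r k' ∧ k' ≤ k))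
  set L := (List.range w.length).mergeSort le
  have hL : L.length = N := by simp [L, hN]
  have hmem : ∀ {j}, j ∈ L ↔ j < N := by simp [L, hN]
  have hle : L.Pairwise (fun a b => le a b) :=
    List.pairwise_mergeSort (fun a b c => by simp only [le, decide_eq_true_eq]; omega)
      (fun a b => by simp only [le, Bool.or_eq_true, decide_eq_true_eq]; omega) _
  have hsorted : L.Pairwise (fun a b => r a < r b) :=
    (hle.and ((List.mergeSort_perm _ _).nodup_iff.mpr List.nodup_range)).imp_of_mem
      fun ha hb ⟨hab, hne⟩ => by
        simp only [le, decide_eq_true_eq] at hab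
        exact hab.resolve_right fun h => hne (hinj (hmem.mp ha) (hmem.mp hb) h.1)
  refine ⟨fun k => L[k.1]'(hL ▸ k.2), ?_,
    fun i j hij => List.pairwise_iff_getElem.mp hsorted _ _ _ _ hij, ?_⟩
  · ext j
    constructor
    · rintro ⟨k, rfl⟩
      exact hmem.mp (List.getElem_mem _)
    · intro hj
      obtain ⟨i, hi, rfl⟩ := List.getElem_of_mem (hmem.mpr hj)
      exact ⟨⟨i, hL ▸ hi⟩, rfl⟩
  · intro k
    have hk : k.1 < (L.map (w.getD · false)).length := by simp [hL]
    exact (List.getD_eq_getElem _ _ hk).trans (List.getElem_map _)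

end Word

structure IsNormalizedInvariant (n m : ℕ) (Δ : Set ℤ) : Prop where
  zero_mem : (0 : ℤ) ∈ Δ
  nonneg : ∀ x ∈ Δ, 0 ≤ x
  add_n_mem : ∀ x ∈ Δ, x + n ∈ Δ
  add_m_mem : ∀ x ∈ Δ, x + m ∈ Δ

theorem IsNormalizedInvariant.mul_add_mul_mem {n m : ℕ} {Δ : Set ℤ}
    (hΔ : IsNormalizedInvariant n m Δ) {a b : ℤ} (ha : 0 ≤ a) (hb : 0 ≤ b) :
    (n : ℤ) * a + m * b ∈ Δ := by
  lift a to ℕ using ha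
  lift b to ℕ using hb
  induction a with
  | zero =>
    induction b with
    | zero => simpa using hΔ.zero_mem
    | succ b ih => simpa [mul_add, add_assoc] using hΔ.add_m_mem _ ih
  | succ a ih => simpa [mul_add, add_right_comm] using hΔ.add_n_mem _ ih

structure IsBoundaryPath (n m : ℕ) (Δ : Set ℤ) (w : List Bool) : Prop where
  count_true : w.count true = n
  count_false : w.count false = m
  inDiagram_iff : ∀ x < m, ∀ y < n, (inDiagram m w x y ↔ boxRank n m x y ∈ Δ)

theorem IsBoundaryPath.length_eq {n m : ℕ} {Δ : Set ℤ} {w : List Bool}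
    (hw : IsBoundaryPath n m Δ w) : w.length = n + m := by
  rw [← List.count_true_add_count_false w, hw.count_true, hw.count_false]

def IsEntryPoint (Δ : Set ℤ) (p a : ℤ) : Prop := ∀ j : ℤ, a + p * j ∈ Δ ↔ 0 ≤ j

namespace IsEntryPoint

variable {Δ : Set ℤ} {p a b : ℤ}

theorem mem (h : IsEntryPoint Δ p a) : a ∈ Δ := by
  simpa using (h 0).mpr le_rfl

theorem sub_notMem (h : IsEntryPoint Δ p a) : a - p ∉ Δ := by
  simpa [sub_eq_add_neg] using (h (-1)).not.mpr (by norm_num)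

theorem eq_of_mem_of_sub_notMem (hb : IsEntryPoint Δ p b) (ha : a ∈ Δ) (ha' : a - p ∉ Δ)
    (hab : p ∣ a - b) : a = b := by
  obtain ⟨j, hj⟩ := hab
  have hj0 : 0 ≤ j := (hb j).mp (by rwa [← hj, add_sub_cancel])
  have hj1 : ¬ 0 ≤ j - 1 :=
    (hb (j - 1)).not.mp (by rwa [mul_sub, mul_one, ← add_sub_assoc, ← hj, add_sub_cancel])
  obtain rfl : j = 0 := by omega
  rwa [mul_zero, sub_eq_zero] at hj

end IsEntryPoint

namespace IsBoundaryPath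

variable {n m : ℕ} {Δ : Set ℤ} {w : List Bool} {k : ℕ}

theorem isEntryPoint_stepRank_of_vertical (hΔ : IsNormalizedInvariant n m Δ)
    (hw : IsBoundaryPath n m Δ w) (hk : k < w.length) (hv : w[k] = true) :
    IsEntryPoint Δ n (stepRank n m w k) := by
  set t := (w.take k).count true
  set f := (w.take k).count false
  have ht : t < n := hw.count_true ▸ List.countP_take_lt_countP hk (by simpa using hv)
  have hf : f ≤ m := hw.count_false ▸ (List.take_sublist k w).count_le false
  have hrank : stepRank n m w k = -m + n * f - m * t := stepRank_eq hk.le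
  have hrow : ∀ x < m, boxRank n m x t ∈ Δ ↔ x + f < m := fun x hx =>
    (hw.inDiagram_iff x hx t ht).symm.trans (inDiagram_iff_of_vertical hw.count_false hk hv hx)
  intro j
  rcases lt_or_ge j (-f) with hj | hj
  · -- beyond the right edge of the rectangle all ranks are negative
    refine iff_of_false (fun hmem => ?_) (by omega)
    have hnj : (n : ℤ) * j ≤ n * (-f - 1) :=
      mul_le_mul_of_nonneg_left (by omega) (by positivity)
    have hmt : (0 : ℤ) ≤ m * t := by positivity
    linarith [hΔ.nonneg _ hmem]
  rcases lt_or_ge j (m - f) with hj' | hj'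
  · obtain ⟨x, hx⟩ : ∃ x : ℕ, (x : ℤ) = m - 1 - f - j :=
      ⟨(m - 1 - f - j).toNat, by omega⟩
    have hbox : boxRank n m x t = stepRank n m w k + n * j := by
      rw [boxRank, hx, hrank]; ring
    rw [← hbox, hrow x (by omega)]
    omega
  · refine iff_of_true ?_ (by omega)
    have hmem := hΔ.mul_add_mul_mem (a := j - (m - f)) (b := n - 1 - t) (by omega) (by omega)
    convert hmem using 1
    rw [hrank]; ring

theorem isEntryPoint_stepRank_add_of_horizontal (hΔ : IsNormalizedInvariant n m Δ)
    (hw : IsBoundaryPath n m Δ w) (hk : k < w.length) (hh : w[k] = false) :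
    IsEntryPoint Δ m (stepRank n m w k + m) := by
  set t := (w.take k).count true
  set f := (w.take k).count false
  have hf : f < m := hw.count_false ▸ List.countP_take_lt_countP hk (by simpa using hh)
  have ht : t ≤ n := hw.count_true ▸ (List.take_sublist k w).count_le true
  have hrank : stepRank n m w k = -m + n * f - m * t := stepRank_eq hk.le
  have hcol : ∀ y < n, boxRank n m (m - 1 - f) y ∈ Δ ↔ y < t := fun y hy =>
    (hw.inDiagram_iff _ (by omega) y hy).symm.trans
      (inDiagram_iff_of_horizontal hw.count_true hw.count_false hk hh hy)
  intro j
  rcases lt_or_ge j (t - n) with hj | hj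
  · -- beyond the top edge of the rectangle all ranks are negative
    refine iff_of_false (fun hmem => ?_) (by omega)
    have hmj : (m : ℤ) * j ≤ m * (t - n - 1) :=
      mul_le_mul_of_nonneg_left (by omega) (by positivity)
    have hnf : (n : ℤ) * f ≤ n * (m - 1) := mul_le_mul_of_nonneg_left (by omega) (by positivity)
    linarith [hΔ.nonneg _ hmem]
  rcases lt_or_ge j t with hj' | hj'
  · obtain ⟨y, hy⟩ : ∃ y : ℕ, (y : ℤ) = t - 1 - j := ⟨(t - 1 - j).toNat, by omega⟩
    have hbox : boxRank n m (m - 1 - f) y = stepRank n m w k + m + m * j := by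
      rw [boxRank, hy, hrank, Nat.cast_sub (by omega), Nat.cast_sub (by omega)]; ring
    rw [← hbox, hcol y (by omega)]
    omega
  · refine iff_of_true ?_ (by omega)
    have hmem := hΔ.mul_add_mul_mem (a := f) (b := j - t) (by omega) (by omega)
    convert hmem using 1
    rw [hrank]; ring

theorem getD_eq_true_iff (hΔ : IsNormalizedInvariant n m Δ) (hw : IsBoundaryPath n m Δ w)
    (hk : k < w.length) :
    w.getD k false = true ↔ stepRank n m w k ∈ Δ ∧ stepRank n m w k - n ∉ Δ := by
  rw [List.getD_eq_getElem _ _ hk]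
  cases hb : w[k]
  · have hentry := hw.isEntryPoint_stepRank_add_of_horizontal hΔ hk hb
    exact iff_of_false (by decide) fun h => hentry.sub_notMem (by simpa using h.1)
  · have hentry := hw.isEntryPoint_stepRank_of_vertical hΔ hk hb
    exact iff_of_true rfl ⟨hentry.mem, hentry.sub_notMem⟩

theorem getD_eq_false_iff (hΔ : IsNormalizedInvariant n m Δ) (hw : IsBoundaryPath n m Δ w)
    (hk : k < w.length) :
    w.getD k false = false ↔ stepRank n m w k ∉ Δ ∧ stepRank n m w k + m ∈ Δ := by
  rw [List.getD_eq_getElem _ _ hk]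
  cases hb : w[k]
  · have hentry := hw.isEntryPoint_stepRank_add_of_horizontal hΔ hk hb
    exact iff_of_true rfl ⟨by simpa using hentry.sub_notMem, hentry.mem⟩
  · have hentry := hw.isEntryPoint_stepRank_of_vertical hΔ hk hb
    exact iff_of_false (by decide) fun h => h.1 hentry.mem

theorem exists_vertical_stepRank_eq (hΔ : IsNormalizedInvariant n m Δ)
    (hw : IsBoundaryPath n m Δ w) (hn : 0 < n) (hco : n.Coprime m) {g : ℤ} (hg : g ∈ Δ)
    (hg' : g - n ∉ Δ) : ∃ k, ∃ hk : k < w.length, w[k] = true ∧ stepRank n m w k = g := by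
  obtain ⟨i, hi, c, hc⟩ := exists_lt_dvd_sub_mul hn hco g
  obtain ⟨k, hk, hv, ht⟩ := List.exists_countP_take_eq (p := (· == true))
    (show n - 1 - i < w.count true by rw [hw.count_true]; omega)
  have hv : w[k] = true := by simpa using hv
  refine ⟨k, hk, hv, (hw.isEntryPoint_stepRank_of_vertical hΔ hk hv).eq_of_mem_of_sub_notMem
    hg hg' ⟨c + m - (w.take k).count false, ?_⟩ |>.symm⟩
  rw [stepRank_eq hk.le]
  simp only [List.count]
  rw [ht, Nat.cast_sub (by omega), Nat.cast_sub (by omega)]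
  linear_combination hc

theorem exists_horizontal_stepRank_eq (hΔ : IsNormalizedInvariant n m Δ)
    (hw : IsBoundaryPath n m Δ w) (hm : 0 < m) (hco : n.Coprime m) {c : ℤ} (hc : c ∉ Δ)
    (hc' : c + m ∈ Δ) : ∃ k, ∃ hk : k < w.length, w[k] = false ∧ stepRank n m w k = c := by
  obtain ⟨f, hf, d, hd⟩ := exists_lt_dvd_sub_mul hm hco.symm (c + m)
  obtain ⟨k, hk, hh, hfk⟩ := List.exists_countP_take_eq (p := (· == false))
    (show f < w.count false by rw [hw.count_false]; omega)
  have hh : w[k] = false := by simpa using hh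
  have hentry := hw.isEntryPoint_stepRank_add_of_horizontal hΔ hk hh
  refine ⟨k, hk, hh, add_right_cancel (hentry.eq_of_mem_of_sub_notMem hc'
    (by rwa [add_sub_cancel_right]) ⟨d + (w.take k).count true, ?_⟩).symm⟩
  rw [stepRank_eq hk.le]
  simp only [List.count]
  rw [hfk]
  linear_combination hd

theorem setOf_vertical_stepRank_eq (hΔ : IsNormalizedInvariant n m Δ)
    (hw : IsBoundaryPath n m Δ w) (hn : 0 < n) (hco : n.Coprime m) :
    {r | ∃ k < n + m, w.getD k false = true ∧ stepRank n m w k = r} =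
      {x | x ∈ Δ ∧ x - n ∉ Δ} := by
  ext r
  constructor
  · rintro ⟨k, hk, hv, rfl⟩
    exact (hw.getD_eq_true_iff hΔ (hw.length_eq ▸ hk)).mp hv
  · rintro ⟨hr, hr'⟩
    obtain ⟨k, hk, hv, rfl⟩ := hw.exists_vertical_stepRank_eq hΔ hn hco hr hr'
    exact ⟨k, hw.length_eq ▸ hk, by rwa [List.getD_eq_getElem _ _ hk], rfl⟩

theorem setOf_horizontal_stepRank_eq (hΔ : IsNormalizedInvariant n m Δ)
    (hw : IsBoundaryPath n m Δ w) (hm : 0 < m) (hco : n.Coprime m) :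
    {r | ∃ k < n + m, w.getD k false = false ∧ stepRank n m w k = r} =
      {x | x ∉ Δ ∧ x + m ∈ Δ} := by
  ext r
  constructor
  · rintro ⟨k, hk, hh, rfl⟩
    exact (hw.getD_eq_false_iff hΔ (hw.length_eq ▸ hk)).mp hh
  · rintro ⟨hr, hr'⟩
    obtain ⟨k, hk, hh, rfl⟩ := hw.exists_horizontal_stepRank_eq hΔ hm hco hr hr'
    exact ⟨k, hw.length_eq ▸ hk, by rwa [List.getD_eq_getElem _ _ hk], rfl⟩

end IsBoundaryPath

/-- Let `n, m` be coprime positive integers and `Δ ⊆ ℤ≥0` a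
`0`-normalized `(n,m)`-invariant subset. Let `w` be the boundary path of the diagram
`D(Δ)` (the word with `n` vertical and `m` horizontal steps whose Young diagram consists
exactly of the boxes with rank in `Δ`). Then:
(a) the ranks of the vertical steps of `w` are exactly the `n`-generators of `Δ`;
(b) the ranks of the horizontal steps of `w` are exactly the `m`-cogenerators of `Δ`;
(c) `ζ(D(Δ)) = G(Δ)`: sorting the steps of `w` in increasing order of rank yields precisely
the word obtained by listing the union of the `n`-generators and `m`-cogenerators in
increasing order (a strictly monotone enumeration `s` of the skeleton) and recording a
vertical step for each `n`-generator and a horizontal step for each `m`-cogenerator. -/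
theorem statement10 (n m : ℕ) (hn : 0 < n) (hm : 0 < m) (hco : Nat.Coprime n m)
    (Δ : Set ℤ) (h0 : (0 : ℤ) ∈ Δ) (hpos : ∀ x ∈ Δ, 0 ≤ x)
    (hninv : ∀ x ∈ Δ, x + n ∈ Δ) (hminv : ∀ x ∈ Δ, x + m ∈ Δ)
    (w : List Bool) (hlen : w.length = n + m) (hcnt : w.count true = n)
    (hbd : ∀ x < m, ∀ y < n, (inDiagram m w x y ↔ boxRank n m x y ∈ Δ)) :
    ({r : ℤ | ∃ k < n + m, w.getD k false = true ∧ stepRank n m w k = r} =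
        {x : ℤ | x ∈ Δ ∧ x - n ∉ Δ}) ∧
    ({r : ℤ | ∃ k < n + m, w.getD k false = false ∧ stepRank n m w k = r} =
        {x : ℤ | x ∉ Δ ∧ x + m ∈ Δ}) ∧
    (∃ s : Fin (n + m) → ℤ, StrictMono s ∧
      Set.range s = {x : ℤ | (x ∈ Δ ∧ x - n ∉ Δ) ∨ (x ∉ Δ ∧ x + m ∈ Δ)} ∧
      ∀ k : Fin (n + m),
        ((sweep n m w).getD (k : ℕ) false = true ↔ (s k ∈ Δ ∧ s k - n ∉ Δ))) := by
  have hΔ : IsNormalizedInvariant n m Δ := ⟨h0, hpos, hninv, hminv⟩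
  have hw : IsBoundaryPath n m Δ w :=
    ⟨hcnt, by have := List.count_true_add_count_false w; omega, hbd⟩
  have hvert := hw.setOf_vertical_stepRank_eq hΔ hn hco
  have hhor := hw.setOf_horizontal_stepRank_eq hΔ hm hco
  obtain ⟨σ, hσ, hmono, hsweep⟩ := exists_sweep_getD_eq hlen (stepRank_injOn hco hlen)
  refine ⟨hvert, hhor, stepRank n m w ∘ σ, hmono, ?_, fun k => ?_⟩
  · rw [Set.range_comp, hσ, Set.ofPred_or, ← hvert, ← hhor]
    ext r
    constructor
    · rintro ⟨k, hk, rfl⟩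
      cases hb : w.getD k false
      exacts [Or.inr ⟨k, hk, hb, rfl⟩, Or.inl ⟨k, hk, hb, rfl⟩]
    · rintro (⟨k, hk, -, rfl⟩ | ⟨k, hk, -, rfl⟩) <;> exact ⟨k, hk, rfl⟩
  · have hk : σ k ∈ Set.Iio (n + m) := hσ ▸ Set.mem_range_self k
    rw [hsweep]
    exact hw.getD_eq_true_iff hΔ (hlen ▸ hk)
end

section
/- Let n ≥ 1 and let a = (a_1,…,a_n) ∈ ℤ≥0^n with a_n > 0. Define the cyclic shift π(a) = (a_n − 1, a_1, a_2, …, a_{n−1}). Then d(π(a)) = d(a). -/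
/-- The statistic `d(a) = #{(i,j) : i < j and (a_i = a_j or a_j = a_i + 1)}`. -/
def dStat (n : ℕ) (a : Fin n → ℕ) : ℕ :=
  (Finset.univ.filter fun p : Fin n × Fin n =>
    p.1 < p.2 ∧ (a p.1 = a p.2 ∨ a p.2 = a p.1 + 1)).card

/-!
Write `a = snoc b x` with `x = a_n`, so that `π(a) = cons (x - 1) b`. The pairs not involving
the moved entry are the pairs of `b` in both tuples, and the remaining ones are matched by
`(1, j + 1) ↦ (j, n)`: for `x > 0`, `(x - 1, y)` is related (`x - 1 = y` or `y = x`)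
exactly when `(y, x)` is related (`x = y + 1` or `y = x`), the two alternatives trading places.
-/

open Finset

section PairCount

variable {α : Type*} (r : α → α → Prop) [DecidableRel r]

def pairCount {n : ℕ} (a : Fin n → α) : ℕ :=
  #{p : Fin n × Fin n | p.1 < p.2 ∧ r (a p.1) (a p.2)}

lemma pairCount_eq_sum {n : ℕ} (a : Fin n → α) :
    pairCount r a = ∑ i, ∑ j, if i < j ∧ r (a i) (a j) then 1 else 0 := by
  rw [pairCount, card_filter, Fintype.sum_prod_type]

lemma pairCount_cons {m : ℕ} (y : α) (b : Fin m → α) :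
    pairCount r (Fin.cons y b : Fin (m + 1) → α) = #{j | r y (b j)} + pairCount r b := by
  simp only [pairCount_eq_sum, card_filter, Fin.sum_univ_succ, Fin.cons_zero, Fin.cons_succ,
    Fin.succ_pos, Fin.succ_lt_succ_iff, Fin.not_lt_zero, false_and, true_and, if_false, zero_add]

lemma pairCount_snoc {m : ℕ} (b : Fin m → α) (x : α) :
    pairCount r (Fin.snoc b x : Fin (m + 1) → α) = pairCount r b + #{i | r (b i) x} := by
  simp only [pairCount_eq_sum, card_filter, Fin.sum_univ_castSucc, Fin.snoc_castSucc,
    Fin.snoc_last, Fin.castSucc_lt_castSucc_iff, Fin.castSucc_lt_last, not_lt.mpr (Fin.le_last _),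
    false_and, true_and, if_false, sum_const_zero, add_zero, sum_add_distrib]

end PairCount

lemma dStat_eq_pairCount (n : ℕ) (a : Fin n → ℕ) :
    dStat n a = pairCount (fun x y => x = y ∨ y = x + 1) a :=
  rfl

lemma card_pred_related_eq {m : ℕ} (b : Fin m → ℕ) {x : ℕ} (hx : 0 < x) :
    #{j | x - 1 = b j ∨ b j = x - 1 + 1} = #{j | b j = x ∨ x = b j + 1} :=
  congrArg card <| filter_congr fun _ _ => by omega

/-- Let `n ≥ 1` and `a ∈ ℤ≥0^n` with `a_n > 0`. For the cyclic shift
`π(a) = (a_n - 1, a_1, …, a_{n-1})` one has `d(π(a)) = d(a)`. -/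
theorem statement11 (n : ℕ) (hn : 0 < n) (a : Fin n → ℕ)
    (hlast : 0 < a ⟨n - 1, by omega⟩) :
    dStat n (fun i : Fin n =>
      if (i : ℕ) = 0 then a ⟨n - 1, by omega⟩ - 1
      else a ⟨(i : ℕ) - 1, by omega⟩) = dStat n a := by
  obtain ⟨m, rfl⟩ := Nat.exists_eq_add_one_of_ne_zero hn.ne'
  have hshift : (fun i : Fin (m + 1) =>
      if (i : ℕ) = 0 then a ⟨m + 1 - 1, by omega⟩ - 1
      else a ⟨(i : ℕ) - 1, by omega⟩) = Fin.cons (a (Fin.last m) - 1) (Fin.init a) := by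
    funext i
    refine Fin.cases rfl (fun i => ?_) i
    simp only [Fin.val_succ, Nat.add_one_ne_zero, if_false, Fin.cons_succ, Fin.init,
      Nat.add_sub_cancel]
    rfl
  rw [hshift, dStat_eq_pairCount, pairCount_cons, card_pred_related_eq (x := a (Fin.last m)) _ hlast, add_comm,
    ← pairCount_snoc, Fin.snoc_init_self, dStat_eq_pairCount]
end

section
/- Let n and m be coprime positive integers and let Δ be a 0-normalized (n,m)-invariant subset of ℤ≥0. Then the number of pairs (x,y) ∈ ℤ≥0 × ℤ≥0 with nx + my ≤ mn − m − n and mn − m − n − nx − my ∉ Δ is finite and equals the cardinality of ℤ≥0 ∖ Δ; that is, the area of the Dyck path D(Δ) equals gap(Δ). -/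
/-!
Every integer has a unique expression `n x + m y` with `0 ≤ x < m`, and `Δ` contains every
`n x + m y` with `x, y ≥ 0`. Writing `mn - m - n - c = n x + m y` gives
`c = n (m - 1 - x) + m (-1 - y)`, so for a gap `c ≥ 0` we must have `y ≥ 0`: `(x, y)` is a box of
rank `c`. Uniqueness of the expression makes the rank injective on boxes of nonnegative rank, so
the rank is a bijection from the boxes counted by `area` onto the gaps.
-/

open Set

namespace RationalDyck

def boxRank (n m : ℤ) (p : ℤ × ℤ) : ℤ := m * n - m - n - n * p.1 - m * p.2

def areaBoxes (n m : ℤ) (Δ : Set ℤ) : Set (ℤ × ℤ) :=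
  {p | 0 ≤ p.1 ∧ 0 ≤ p.2 ∧ n * p.1 + m * p.2 ≤ m * n - m - n ∧ boxRank n m p ∉ Δ}

def gapSet (Δ : Set ℤ) : Set ℤ := {x | 0 ≤ x ∧ x ∉ Δ}

lemma add_mul_mem_of_forall_add_mem {Δ : Set ℤ} {a : ℤ} (h : ∀ x ∈ Δ, x + a ∈ Δ) {x : ℤ}
    (hx : x ∈ Δ) (k : ℕ) : x + a * k ∈ Δ := by
  induction k with
  | zero => simpa using hx
  | succ k ih => simpa [mul_add, add_assoc] using h _ ih

lemma mul_add_mul_mem {n m : ℤ} {Δ : Set ℤ} (h0 : 0 ∈ Δ) (hn : ∀ x ∈ Δ, x + n ∈ Δ)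
    (hm : ∀ x ∈ Δ, x + m ∈ Δ) {x y : ℤ} (hx : 0 ≤ x) (hy : 0 ≤ y) : n * x + m * y ∈ Δ := by
  lift x to ℕ using hx
  lift y to ℕ using hy
  simpa using add_mul_mem_of_forall_add_mem hm (add_mul_mem_of_forall_add_mem hn h0 x) y

section Representation

variable {n m : ℤ}

lemma exists_eq_mul_add_mul (hco : IsCoprime n m) (hm : 0 < m) (c : ℤ) :
    ∃ x y, 0 ≤ x ∧ x < m ∧ n * x + m * y = c := by
  obtain ⟨u, v, huv⟩ := hco
  refine ⟨u * c % m, v * c + n * (u * c / m), Int.emod_nonneg _ hm.ne', Int.emod_lt_of_pos _ hm,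
    ?_⟩
  linear_combination n * Int.emod_add_mul_ediv (u * c) m + c * huv

lemma eq_of_mul_add_mul_eq (hco : IsCoprime n m) (hm : 0 < m) {x y x' y' : ℤ}
    (hx : 0 ≤ x) (hxm : x < m) (hx' : 0 ≤ x') (hx'm : x' < m)
    (h : n * x + m * y = n * x' + m * y') : x = x' ∧ y = y' := by
  have hdvd : m ∣ x - x' := hco.symm.dvd_of_dvd_mul_left ⟨y' - y, by linear_combination h⟩
  have hxx : x = x' := sub_eq_zero.mp (Int.eq_zero_of_abs_lt_dvd hdvd (abs_sub_lt_iff.mpr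
    ⟨by linarith, by linarith⟩))
  subst hxx
  exact ⟨rfl, mul_left_cancel₀ hm.ne' (by linarith)⟩

lemma lt_of_mul_add_mul_le (hn : 0 < n) (hm : 0 < m) {x y : ℤ} (hy : 0 ≤ y)
    (h : n * x + m * y ≤ m * n - m - n) : x < m := by
  nlinarith

end Representation

theorem bijOn_boxRank_areaBoxes_gapSet {n m : ℤ} (hn : 0 < n) (hm : 0 < m)
    (hco : IsCoprime n m) {Δ : Set ℤ} (h0 : 0 ∈ Δ) (hninv : ∀ x ∈ Δ, x + n ∈ Δ)
    (hminv : ∀ x ∈ Δ, x + m ∈ Δ) :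
    BijOn (boxRank n m) (areaBoxes n m Δ) (gapSet Δ) := by
  refine ⟨?mapsTo, ?injOn, ?surjOn⟩
  case mapsTo =>
    rintro ⟨x, y⟩ ⟨-, -, hle, hgap⟩
    exact ⟨by simp only [boxRank]; linarith, hgap⟩
  case injOn =>
    rintro ⟨x, y⟩ ⟨hx, hy, hle, -⟩ ⟨x', y'⟩ ⟨hx', hy', hle', -⟩ heq
    dsimp only [boxRank] at *
    obtain ⟨rfl, rfl⟩ := eq_of_mul_add_mul_eq (y := y) (y' := y') hco hm hx
      (lt_of_mul_add_mul_le hn hm hy hle) hx' (lt_of_mul_add_mul_le hn hm hy' hle') (by linarith)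
    rfl
  case surjOn =>
    rintro c ⟨hc, hgap⟩
    obtain ⟨x, y, hx, hxm, hxy⟩ := exists_eq_mul_add_mul hco hm (m * n - m - n - c)
    have hrank : boxRank n m (x, y) = c := by simp only [boxRank]; linarith
    -- `c = n (m - 1 - x) + m (-1 - y)` with `m - 1 - x ≥ 0`, so `-1 - y ≥ 0` would put `c` in `Δ`.
    have hy : 0 ≤ y := by
      by_contra! hy
      exact hgap (by
        convert mul_add_mul_mem h0 hninv hminv (x := m - 1 - x) (y := -1 - y)
          (by linarith) (by linarith) using 1
        linarith)
    exact ⟨(x, y), ⟨hx, hy, by linarith, hrank ▸ hgap⟩, hrank⟩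

lemma gapSet_subset_Icc {n m : ℤ} (hn : 0 < n) (hm : 0 < m) (hco : IsCoprime n m) {Δ : Set ℤ}
    (h0 : 0 ∈ Δ) (hninv : ∀ x ∈ Δ, x + n ∈ Δ) (hminv : ∀ x ∈ Δ, x + m ∈ Δ) :
    gapSet Δ ⊆ Icc 0 (m * n - m - n) := by
  rintro c hc
  obtain ⟨⟨x, y⟩, ⟨hx, hy, -, -⟩, rfl⟩ :=
    (bijOn_boxRank_areaBoxes_gapSet hn hm hco h0 hninv hminv).surjOn hc
  refine ⟨hc.1, ?_⟩
  simp only [boxRank]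
  nlinarith

end RationalDyck

open RationalDyck in
theorem statement16_general (n m : ℕ) (hn : 0 < n) (hm : 0 < m) (hco : Nat.Coprime n m)
    (Δ : Set ℤ) (h0 : (0 : ℤ) ∈ Δ)
    (hninv : ∀ x ∈ Δ, x + n ∈ Δ) (hminv : ∀ x ∈ Δ, x + m ∈ Δ) :
    {p : ℤ × ℤ | 0 ≤ p.1 ∧ 0 ≤ p.2 ∧ (n : ℤ) * p.1 + (m : ℤ) * p.2 ≤ (m : ℤ) * n - m - n ∧
        ((m : ℤ) * n - m - n - n * p.1 - m * p.2) ∉ Δ}.Finite ∧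
    {x : ℤ | 0 ≤ x ∧ x ∉ Δ}.Finite ∧
    {p : ℤ × ℤ | 0 ≤ p.1 ∧ 0 ≤ p.2 ∧ (n : ℤ) * p.1 + (m : ℤ) * p.2 ≤ (m : ℤ) * n - m - n ∧
        ((m : ℤ) * n - m - n - n * p.1 - m * p.2) ∉ Δ}.ncard =
      {x : ℤ | 0 ≤ x ∧ x ∉ Δ}.ncard := by
  have hn' : (0 : ℤ) < n := by exact_mod_cast hn
  have hm' : (0 : ℤ) < m := by exact_mod_cast hm
  have hco' : IsCoprime (n : ℤ) m := Nat.isCoprime_iff_coprime.mpr hco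
  have hbij := bijOn_boxRank_areaBoxes_gapSet hn' hm' hco' h0 hninv hminv
  have hgaps : (gapSet Δ).Finite :=
    (finite_Icc _ _).subset (gapSet_subset_Icc hn' hm' hco' h0 hninv hminv)
  exact ⟨hbij.finite_iff_finite.mpr hgaps, hgaps, hbij.ncard_eq⟩

/-- Let `n, m` be coprime positive integers and `Δ ⊆ ℤ≥0` a
`0`-normalized `(n,m)`-invariant subset. Then the set of boxes
`(x,y) ∈ ℤ≥0 × ℤ≥0` with `nx + my ≤ mn - m - n` (nonnegative rank) whose rank
`mn - m - n - nx - my` does not lie in `Δ` is finite, and its cardinality equals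
`gap(Δ) = |ℤ≥0 ∖ Δ|`; that is, `area(D(Δ)) = gap(Δ)`. -/
theorem statement16 (n m : ℕ) (hn : 0 < n) (hm : 0 < m) (hco : Nat.Coprime n m)
    (Δ : Set ℤ) (h0 : (0 : ℤ) ∈ Δ) (hpos : ∀ x ∈ Δ, 0 ≤ x)
    (hninv : ∀ x ∈ Δ, x + n ∈ Δ) (hminv : ∀ x ∈ Δ, x + m ∈ Δ) :
    {p : ℤ × ℤ | 0 ≤ p.1 ∧ 0 ≤ p.2 ∧ (n : ℤ) * p.1 + (m : ℤ) * p.2 ≤ (m : ℤ) * n - m - n ∧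
        ((m : ℤ) * n - m - n - n * p.1 - m * p.2) ∉ Δ}.Finite ∧
    {x : ℤ | 0 ≤ x ∧ x ∉ Δ}.Finite ∧
    {p : ℤ × ℤ | 0 ≤ p.1 ∧ 0 ≤ p.2 ∧ (n : ℤ) * p.1 + (m : ℤ) * p.2 ≤ (m : ℤ) * n - m - n ∧
        ((m : ℤ) * n - m - n - n * p.1 - m * p.2) ∉ Δ}.ncard =
      {x : ℤ | 0 ≤ x ∧ x ∉ Δ}.ncard :=
  statement16_general n m hn hm hco Δ h0 hninv hminv
end
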